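/- Let G be a connected simple graph with n vertices and m edges that is not a tree (so m ≥ n), and let I be the edge-vertex incidence matrix of G. If m > n, or if G contains a cycle of even length, then det(I·Iᵀ) = 0. If m = n and G contains a cycle of odd length, then det(I·Iᵀ) = 4. -/

import Mathlib

/-!
An alternating ±1 vector on the edges of a walk from `u` to `v` multiplies the incidence matrix
`I` to `e u ± e v`. On an even cycle this is a nonzero left kernel vector of `I`, so `I * Iᵀ` is
singular; with more edges than vertices `I * Iᵀ` has too small a rank anyway.

When `m = n`, `I` is square and `det (I * Iᵀ) = (det I) ^ 2`. Every row of `I` sums to `2`, so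
`2 ∣ det I`. Conversely, in a connected graph with an odd cycle every vertex `a` is joined to a
fixed vertex `v` by an odd walk, so `e a + e v` lies in the integer row span of `I`; the matrix
with these rows is `1 + 𝟙 ⬝ e vᵀ`, of determinant `2`, hence `det I ∣ 2`.
-/

open Matrix

namespace Matrix

variable {m n R : Type*} [Fintype m] [Fintype n] [DecidableEq m]

theorem det_mul_eq_zero_of_card_lt {K : Type*} [Field K] (A : Matrix m n K) (B : Matrix n m K)
    (h : Fintype.card n < Fintype.card m) : (A * B).det = 0 := by
  by_contra hdet
  have hrank : (A * B).rank = Fintype.card m :=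
    rank_of_isUnit _ ((isUnit_iff_isUnit_det _).mpr (isUnit_iff_ne_zero.mpr hdet))
  have := (rank_mul_le_left A B).trans (rank_le_card_width A)
  omega

theorem det_mul_eq_zero_of_vecMul_eq_zero [CommRing R] [IsDomain R] {A : Matrix m n R}
    (B : Matrix n m R) {x : m → R} (hx : x ≠ 0) (hxA : x ᵥ* A = 0) : (A * B).det = 0 :=
  exists_vecMul_eq_zero_iff.mp ⟨x, hx, by rw [← vecMul_vecMul, hxA, zero_vecMul]⟩

theorem det_mul_transpose_eq_sq [DecidableEq n] [CommRing R] (A : Matrix m n R) (e : n ≃ m) :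
    (A * Aᵀ).det = (A.submatrix e id).det ^ 2 := by
  rw [← det_submatrix_equiv_self e, ← submatrix_mul_equiv A Aᵀ e (Equiv.refl n) e, det_mul,
    ← transpose_submatrix, det_transpose, sq]
  rfl

theorem dvd_det_of_forall_sum_eq [CommRing R] (A : Matrix m m R) {r : R}
    (j : m) (hA : ∀ i, ∑ k, A i k = r) : r ∣ A.det := by
  -- adding all other columns to column `j` leaves the determinant unchanged and makes it `r • 1`
  have hcol :
      A.updateCol j (fun i => ∑ k, (1 : m → R) k • A i k) = A.updateCol j (r • 1) := by
    congr 1; ext i; simp [hA]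
  have := det_updateCol_sum A j 1
  rw [hcol, det_updateCol_smul, Pi.one_apply, one_smul] at this
  exact ⟨_, this.symm⟩

end Matrix

namespace SimpleGraph

theorem Connected.exists_walk_odd_length {V : Type*} {G : SimpleGraph V}
    (hG : G.Connected) {v : V} (w : G.Walk v v) (hw : Odd w.length) (u : V) :
    ∃ p : G.Walk u v, Odd p.length := by
  obtain ⟨p⟩ := hG.preconnected u v
  rcases Nat.even_or_odd p.length with hp | hp
  · exact ⟨p.append w, by rw [Walk.length_append]; exact hp.add_odd hw⟩
  · exact ⟨p, hp⟩

section

variable {V : Type*} [DecidableEq V] (G : SimpleGraph V) (R : Type*)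

def edgeIncMatrix [Zero R] [One R] : Matrix G.edgeSet V R :=
  Matrix.of fun e v => if v ∈ (e : Sym2 V) then 1 else 0

variable {G R}

theorem edgeIncMatrix_mk [AddMonoidWithOne R] {a b : V} (h : G.Adj a b) :
    G.edgeIncMatrix R ⟨s(a, b), h⟩ = Pi.single a 1 + Pi.single b 1 := by
  ext q
  have hab := h.ne
  simp only [edgeIncMatrix, Matrix.of_apply, Sym2.mem_iff, Pi.add_apply, Pi.single_apply]
  split_ifs <;> simp_all

theorem sum_edgeIncMatrix_apply [Fintype V] [AddCommMonoidWithOne R] (e : G.edgeSet) :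
    ∑ v, G.edgeIncMatrix R e v = 2 := by
  obtain ⟨e, he⟩ := e
  induction e using Sym2.ind with
  | _ a b => simp [edgeIncMatrix_mk he, Finset.sum_add_distrib, one_add_one_eq_two]

theorem edgeIncMatrix_map_intCast [Ring R] :
    (G.edgeIncMatrix ℤ).map (Int.castRingHom R) = G.edgeIncMatrix R := by
  ext e v
  simp only [edgeIncMatrix, map_apply, of_apply]
  split_ifs <;> simp

namespace Walk

variable (R) [Ring R]

/-- Entry `e` is the sum of `(-1) ^ i` over the steps `i` at which the walk traverses `e`, so its
product with the incidence matrix telescopes along the walk. -/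
noncomputable def alternatingEdgeVector : ∀ {u v : V}, G.Walk u v → G.edgeSet → R
  | _, _, nil => 0
  | _, _, cons h p => Pi.single ⟨s(_, _), h⟩ 1 - p.alternatingEdgeVector

variable {u v : V}

theorem alternatingEdgeVector_vecMul [Fintype G.edgeSet] (p : G.Walk u v) :
    (p.alternatingEdgeVector R) ᵥ* G.edgeIncMatrix R =
      Pi.single u 1 - (-1) ^ p.length • Pi.single v 1 := by
  induction p with
  | nil => simp [alternatingEdgeVector]
  | cons h p ih =>
    rw [alternatingEdgeVector, Matrix.sub_vecMul, ih, Matrix.single_one_vecMul, Matrix.row,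
      edgeIncMatrix_mk, length_cons, pow_succ]
    module

theorem alternatingEdgeVector_apply_of_notMem (p : G.Walk u v) {e : G.edgeSet}
    (he : (e : Sym2 V) ∉ p.edges) : p.alternatingEdgeVector R e = 0 := by
  induction p with
  | nil => rfl
  | cons h p ih =>
    rw [edges_cons, List.mem_cons, not_or] at he
    rw [alternatingEdgeVector, Pi.sub_apply, ih he.2,
      Pi.single_eq_of_ne (fun h => he.1 (congrArg Subtype.val h)), sub_zero]

theorem IsCycle.alternatingEdgeVector_ne_zero [Nontrivial R] {p : G.Walk v v} (hp : p.IsCycle) :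
    p.alternatingEdgeVector R ≠ 0 := by
  cases p with
  | nil => exact (not_isCycle_nil hp).elim
  | cons h q =>
    have hfirst : s(v, _) ∉ q.edges := (List.nodup_cons.mp hp.edges_nodup).1
    intro h0
    have := congrFun h0 ⟨s(v, _), h⟩
    rw [alternatingEdgeVector, Pi.sub_apply, Pi.single_eq_same,
      alternatingEdgeVector_apply_of_notMem R q hfirst] at this
    simp at this

end Walk

end

section

variable {V : Type*} [Fintype V] [DecidableEq V] {G : SimpleGraph V} [Fintype G.edgeSet]
  {R : Type*} [CommRing R]

theorem Walk.IsCycle.det_edgeIncMatrix_mul_transpose_eq_zero [IsDomain R] {v : V}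
    {w : G.Walk v v} (hw : w.IsCycle) (heven : Even w.length) :
    (G.edgeIncMatrix R * (G.edgeIncMatrix R)ᵀ).det = 0 :=
  det_mul_eq_zero_of_vecMul_eq_zero _ (hw.alternatingEdgeVector_ne_zero R) <| by
    rw [Walk.alternatingEdgeVector_vecMul, heven.neg_one_pow, one_smul, sub_self]

theorem Connected.natAbs_det_edgeIncMatrix_submatrix (hG : G.Connected) {v : V}
    (w : G.Walk v v) (hw : Odd w.length) (ε : V ≃ G.edgeSet) :
    ((G.edgeIncMatrix ℤ).submatrix ε id).det.natAbs = 2 := by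
  set M := (G.edgeIncMatrix ℤ).submatrix ε id
  have two_dvd : 2 ∣ M.det := dvd_det_of_forall_sum_eq M v fun a => sum_edgeIncMatrix_apply (ε a)
  have dvd_two : M.det ∣ 2 := by
    -- an odd walk from `a` to `v` writes `e a + e v` as an integer combination of rows of `M`
    choose p hp using hG.exists_walk_odd_length w hw
    set X : Matrix V V ℤ := (Matrix.of fun a => (p a).alternatingEdgeVector ℤ).submatrix id ε
    have hXM :
        X * M = 1 + replicateCol Unit (1 : V → ℤ) * replicateRow Unit (Pi.single v (1 : ℤ)) := by
      rw [submatrix_mul_equiv, submatrix_id_id]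
      funext a
      change (p a).alternatingEdgeVector ℤ ᵥ* G.edgeIncMatrix ℤ = _
      rw [Walk.alternatingEdgeVector_vecMul, (hp a).neg_one_pow]
      ext q
      simp [Pi.single_apply, one_apply, mul_apply, eq_comm]
    have hdet : (X * M).det = 2 := by
      rw [hXM, det_one_add_replicateCol_mul_replicateRow]
      simp
    exact Dvd.intro_left _ ((det_mul X M).symm.trans hdet)
  exact Int.natAbs_eq_of_dvd_dvd dvd_two two_dvd

theorem Connected.det_edgeIncMatrix_mul_transpose_eq_four (hG : G.Connected)
    (hcard : Fintype.card G.edgeSet = Fintype.card V) {v : V} (w : G.Walk v v)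
    (hw : Odd w.length) : (G.edgeIncMatrix R * (G.edgeIncMatrix R)ᵀ).det = 4 := by
  let ε := Fintype.equivOfCardEq hcard.symm
  rw [det_mul_transpose_eq_sq _ ε, ← edgeIncMatrix_map_intCast, submatrix_map,
    ← RingHom.mapMatrix_apply, ← RingHom.map_det, ← map_pow, ← Int.natAbs_sq,
    hG.natAbs_det_edgeIncMatrix_submatrix w hw ε]
  norm_num

end

end SimpleGraph

theorem det_gram_incidence_non_tree_general {V : Type} [Fintype V] [DecidableEq V]
    (G : SimpleGraph V) [DecidableRel G.Adj] (hG : G.Connected)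
    (I : Matrix G.edgeSet V ℝ)
    (hI : ∀ (e : G.edgeSet) (v : V), I e v = if v ∈ (e : Sym2 V) then 1 else 0) :
    ((Fintype.card G.edgeSet > Fintype.card V ∨
        ∃ (v : V) (w : G.Walk v v), w.IsCycle ∧ Even w.length) → (I * Iᵀ).det = 0) ∧
    ((Fintype.card G.edgeSet = Fintype.card V ∧
        ∃ (v : V) (w : G.Walk v v), w.IsCycle ∧ Odd w.length) → (I * Iᵀ).det = 4) := by
  obtain rfl : I = G.edgeIncMatrix ℝ := Matrix.ext hI
  refine ⟨?_, ?_⟩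
  · rintro (hcard | ⟨v, w, hw, heven⟩)
    · exact det_mul_eq_zero_of_card_lt _ _ hcard
    · exact hw.det_edgeIncMatrix_mul_transpose_eq_zero heven
  · rintro ⟨hcard, v, w, -, hodd⟩
    exact hG.det_edgeIncMatrix_mul_transpose_eq_four hcard w hodd

/-- Let `G` be a connected simple graph with `n` vertices and `m` edges that is not a tree,
and let `I` be its edge-vertex incidence matrix.  If `m > n` or `G` contains an even cycle,
then `det (I ⬝ Iᵀ) = 0`; if `m = n` and `G` contains an odd cycle, then `det (I ⬝ Iᵀ) = 4`. -/
theorem det_gram_incidence_non_tree {V : Type} [Fintype V] [DecidableEq V]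
    (G : SimpleGraph V) [DecidableRel G.Adj] (hG : G.Connected) (hnt : ¬ G.IsTree)
    (I : Matrix G.edgeSet V ℝ)
    (hI : ∀ (e : G.edgeSet) (v : V), I e v = if v ∈ (e : Sym2 V) then 1 else 0) :
    ((Fintype.card G.edgeSet > Fintype.card V ∨
        ∃ (v : V) (w : G.Walk v v), w.IsCycle ∧ Even w.length) → (I * Iᵀ).det = 0) ∧
    ((Fintype.card G.edgeSet = Fintype.card V ∧
        ∃ (v : V) (w : G.Walk v v), w.IsCycle ∧ Odd w.length) → (I * Iᵀ).det = 4) :=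
  det_gram_incidence_non_tree_general G hG I hI
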